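/- arXiv:1711.06760 — 2 statements merged into one kernel-verified Lean document; each statement's English description precedes it below -/
import Mathlib

section
/- Complement of attractor is a trap: with W as the limit attractor set for player 2 from the previous construction (targets W⁰, reachability game on finite digraph G with V = V₁ ∪ V₂), player 1 has a positional strategy such that from any starting vertex v ∈ V \ W with at least one outgoing edge from every non-terminal vertex, the play never enters W; in particular the play never reaches W⁰. -/
/-- The player-2 attractor levels of the target set `W0`: `attr (k+1)` adds the
`V₂`-vertices with some edge into `attr k` and the `V₁`-vertices having an outgoing
edge all of whose outgoing edges enter `attr k`. -/
def attr {V : Type*} (E : V → V → Prop) (V₁ V₂ : Set V) (W0 : Set V) : ℕ → Set V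
  | 0 => W0
  | k + 1 =>
      attr E V₁ V₂ W0 k ∪
        {v | v ∈ V₂ ∧ ∃ w, E v w ∧ w ∈ attr E V₁ V₂ W0 k} ∪
        {v | v ∈ V₁ ∧ (∃ w, E v w) ∧ ∀ w, E v w → w ∈ attr E V₁ V₂ W0 k}

/-! A `V₂`-vertex with an edge into the attractor joins it one level later; a `V₁`-vertex
with at least one edge, all of them into the attractor, joins it too, because its finitely many
successors lie in a common level. Hence outside the attractor a `V₁`-vertex can always stay
outside and a `V₂`-vertex cannot leave, so choosing such a successor at every `V₁`-vertex
gives a strategy whose plays never enter the attractor. -/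

section Attractor

variable {V : Type*} (E : V → V → Prop) (V₁ V₂ W0 : Set V)

lemma attr_mono : Monotone (attr E V₁ V₂ W0) :=
  monotone_nat_of_le_succ fun _ _ hv => Or.inl (Or.inl hv)

variable {E V₁ V₂ W0}

lemma mem_iUnion_attr_of_mem_V₂ {v w : V} (hv : v ∈ V₂) (hvw : E v w)
    (hw : w ∈ ⋃ k, attr E V₁ V₂ W0 k) : v ∈ ⋃ k, attr E V₁ V₂ W0 k := by
  obtain ⟨k, hk⟩ := Set.mem_iUnion.mp hw
  exact Set.mem_iUnion.mpr ⟨k + 1, Or.inl (Or.inr ⟨hv, w, hvw, hk⟩)⟩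

lemma mem_iUnion_attr_of_mem_V₁ {v : V} (hv : v ∈ V₁) (hfin : {w | E v w}.Finite)
    (hedge : ∃ w, E v w) (hsucc : ∀ w, E v w → w ∈ ⋃ k, attr E V₁ V₂ W0 k) : v ∈ ⋃ k, attr E V₁ V₂ W0 k := by
  obtain ⟨k, hk⟩ := (attr_mono E V₁ V₂ W0).directed_le.exists_mem_subset_of_finset_subset_biUnion
    (s := hfin.toFinset) (by rw [Set.Finite.coe_toFinset]; exact hsucc)
  rw [Set.Finite.coe_toFinset] at hk
  exact Set.mem_iUnion.mpr ⟨k + 1, Or.inr ⟨hv, hedge, hk⟩⟩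

end Attractor

def IsTrapFor {V : Type*} (E : V → V → Prop) (V₁ V₂ : Set V) (σ : V → V) (S : Set V) : Prop :=
  (∀ v ∈ S, v ∈ V₁ → σ v ∈ S) ∧ ∀ v ∈ S, v ∈ V₂ → ∀ w, E v w → w ∈ S

lemma IsTrapFor.play_mem {V : Type*} {E : V → V → Prop} {V₁ V₂ : Set V} {σ : V → V}
    {S : Set V} (hS : IsTrapFor E V₁ V₂ σ S) (hcov : V₁ ∪ V₂ = Set.univ) (f : ℕ → V)
    (h0 : f 0 ∈ S) (hplay : ∀ n, E (f n) (f (n + 1)) ∧ (f n ∈ V₁ → f (n + 1) = σ (f n))) :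
    ∀ n, f n ∈ S
  | 0 => h0
  | n + 1 => by
    have hn := hS.play_mem hcov f h0 hplay n
    rcases hcov.symm ▸ Set.mem_univ (f n) with h₁ | h₂
    · exact (hplay n).2 h₁ ▸ hS.1 _ hn h₁
    · exact hS.2 _ hn h₂ _ (hplay n).1

theorem attractor_complement_trap_general {V : Type*} [Fintype V] (E : V → V → Prop)
    (V₁ V₂ : Set V) (hcov : V₁ ∪ V₂ = Set.univ)
    (W0 : Set V) (W : Set V) (hW : W = ⋃ k, attr E V₁ V₂ W0 k)
    (hout : ∀ v ∉ W, ∃ w, E v w) :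
    (∀ v ∈ V₁, v ∉ W → ∃ w, E v w ∧ w ∉ W) ∧
    (∀ v ∈ V₂, v ∉ W → ∀ w, E v w → w ∉ W) ∧
    ∃ σ₁ : V → V, (∀ v ∈ V₁, v ∉ W → E v (σ₁ v) ∧ σ₁ v ∉ W) ∧
      ∀ f : ℕ → V, f 0 ∉ W →
        (∀ n, E (f n) (f (n + 1)) ∧ (f n ∈ V₁ → f (n + 1) = σ₁ (f n))) →
        ∀ n, f n ∉ W := by
  have hV₁ : ∀ v ∈ V₁, v ∉ W → ∃ w, E v w ∧ w ∉ W := by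
    subst hW
    intro v hv hvW
    by_contra! hsucc
    exact hvW (mem_iUnion_attr_of_mem_V₁ hv (Set.toFinite _) (hout v hvW) hsucc)
  have hV₂ : ∀ v ∈ V₂, v ∉ W → ∀ w, E v w → w ∉ W := by
    subst hW
    exact fun v hv hvW w hvw hw => hvW (mem_iUnion_attr_of_mem_V₂ hv hvw hw)
  have hchoice : ∀ v, ∃ w, v ∈ V₁ → v ∉ W → E v w ∧ w ∉ W := by
    intro v
    by_cases h : v ∈ V₁ ∧ v ∉ W
    · exact (hV₁ v h.1 h.2).imp fun _ hw _ _ => hw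
    · exact ⟨v, fun h₁ h₂ => (h ⟨h₁, h₂⟩).elim⟩
  choose σ₁ hσ₁ using hchoice
  have htrap : IsTrapFor E V₁ V₂ σ₁ Wᶜ :=
    ⟨fun v hv h₁ => (hσ₁ v h₁ hv).2, fun v hv h₂ => hV₂ v h₂ hv⟩
  exact ⟨hV₁, hV₂, σ₁, hσ₁, htrap.play_mem hcov⟩

/-- The complement of the player-2 attractor `W` is a trap for player 1: assuming every
vertex outside `W` has an outgoing edge, every `V₁`-vertex outside `W` has an outgoing
edge staying outside `W`, every edge from a `V₂`-vertex outside `W` stays outside `W`,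
and player 1 has a positional strategy keeping every play starting outside `W` outside
`W` forever (in particular, the play never reaches `W0`). -/
theorem attractor_complement_trap {V : Type*} [Fintype V] (E : V → V → Prop)
    (V₁ V₂ : Set V) (hcov : V₁ ∪ V₂ = Set.univ) (hdisj : Disjoint V₁ V₂)
    (W0 : Set V) (W : Set V) (hW : W = ⋃ k, attr E V₁ V₂ W0 k)
    (hout : ∀ v ∉ W, ∃ w, E v w) :
    (∀ v ∈ V₁, v ∉ W → ∃ w, E v w ∧ w ∉ W) ∧
    (∀ v ∈ V₂, v ∉ W → ∀ w, E v w → w ∉ W) ∧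
    ∃ σ₁ : V → V, (∀ v ∈ V₁, v ∉ W → E v (σ₁ v) ∧ σ₁ v ∉ W) ∧
      ∀ f : ℕ → V, f 0 ∉ W →
        (∀ n, E (f n) (f (n + 1)) ∧ (f n ∈ V₁ → f (n + 1) = σ₁ (f n))) →
        ∀ n, f n ∉ W :=
  attractor_complement_trap_general E V₁ V₂ hcov W0 W hW hout
end

section
/- Every two-person win/lose DG game has a saddle point in pure positional strategies: let G = (V,E) be a finite digraph, V = V₁ ∪ V₂ ∪ V_T with V_T the terminals (no outgoing edges except self-loops), every non-terminal vertex has an outgoing edge, and let the outcomes be the terminals together with one outcome c for all infinite (non-terminating) plays; fix a partition of outcomes into A₁ (player 1 wins) and A₂ (player 2 wins). Then for every initial position v₀ there exist positional strategies (x₁, x₂) forming a saddle point: exactly one player has a positional strategy winning against all strategies of the opponent. -/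
/-!
Whoever wins the infinite plays, the game is a reachability game for the other player: if
infinite plays are lost by player 1, he must reach `T₁`; otherwise player 2 must reach the
losing terminals `VT \ T₁`, since terminals are absorbing. The attractor of a target is built
in levels: from level `n + 1` the attacker can force the play into level `n`, so always moving
to a successor of least level reaches the target. Once the levels stabilise, the complement of
the attractor is a trap for the attacker, in which the defender stays positionally. Both players
cannot win, since two positional strategies of disjoint players induce a common play.
-/

namespace GraphGame

variable {V : Type*} (E : V → V → Prop)

def IsPlay (S : Set V) (σ : V → V) (f : ℕ → V) : Prop :=
  ∀ n, E (f n) (f (n + 1)) ∧ (f n ∈ S → f (n + 1) = σ (f n))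

def controllablePre (S A : Set V) : Set V :=
  {v | (v ∈ S ∧ ∃ w, E v w ∧ w ∈ A) ∨ (v ∉ S ∧ ∀ w, E v w → w ∈ A)}

def attractorLevel (S T : Set V) : ℕ → Set V
  | 0 => T
  | n + 1 => attractorLevel S T n ∪ controllablePre E S (attractorLevel S T n)

def attractor (S T : Set V) : Set V := ⋃ n, attractorLevel E S T n

variable {E}

theorem IsPlay.of_subset_union {S P D : Set V} {σ : V → V} {f : ℕ → V}
    (hf : IsPlay E S σ f) (hσ : ∀ v, E v (σ v)) (hP : ∀ v ∈ P, ∀ w, E v w → w = v)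
    (hD : D ⊆ S ∪ P) : IsPlay E D σ f := fun n =>
  ⟨(hf n).1, fun hn => (hD hn).elim (hf n).2
    fun hnP => (hP _ hnP _ (hf n).1).trans (hP _ hnP _ (hσ _)).symm⟩

theorem exists_isPlay_of_disjoint (hout : ∀ v, ∃ w, E v w) {S₁ S₂ : Set V}
    (h : Disjoint S₁ S₂) {σ₁ σ₂ : V → V} (hσ₁ : ∀ v ∈ S₁, E v (σ₁ v))
    (hσ₂ : ∀ v ∈ S₂, E v (σ₂ v)) (v₀ : V) :
    ∃ f, f 0 = v₀ ∧ IsPlay E S₁ σ₁ f ∧ IsPlay E S₂ σ₂ f := by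
  have hmove : ∀ v, ∃ w, E v w ∧ (v ∈ S₁ → w = σ₁ v) ∧ (v ∈ S₂ → w = σ₂ v) := by
    intro v
    by_cases h₁ : v ∈ S₁
    · exact ⟨σ₁ v, hσ₁ v h₁, fun _ => rfl, fun h₂ => (h.notMem_of_mem_left h₁ h₂).elim⟩
    by_cases h₂ : v ∈ S₂
    · exact ⟨σ₂ v, hσ₂ v h₂, (absurd · h₁), fun _ => rfl⟩
    obtain ⟨w, hw⟩ := hout v
    exact ⟨w, hw, (absurd · h₁), (absurd · h₂)⟩
  choose g hgE hg₁ hg₂ using hmove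
  refine ⟨fun n => g^[n] v₀, rfl, fun n => ?_, fun n => ?_⟩ <;>
    simp only [Function.iterate_succ_apply']
  exacts [⟨hgE _, hg₁ _⟩, ⟨hgE _, hg₂ _⟩]

theorem eq_of_le_of_mem_absorbing {P : Set V} (hP : ∀ v ∈ P, ∀ w, E v w → w = v)
    {f : ℕ → V} (hf : ∀ n, E (f n) (f (n + 1))) {m n : ℕ} (hmn : m ≤ n) (hm : f m ∈ P) :
    f n = f m := by
  induction n, hmn using Nat.le_induction with
  | base => rfl
  | succ n _ ih => exact (hP _ (ih ▸ hm) _ (hf n)).trans ih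

theorem exists_mem_or_forall_notMem_iff_of_absorbing {P T : Set V}
    (hP : ∀ v ∈ P, ∀ w, E v w → w = v) (hT : T ⊆ P) {f : ℕ → V} (hf : ∀ n, E (f n) (f (n + 1))) :
    ((∃ n, f n ∈ T) ∨ ∀ n, f n ∉ P) ↔ ∀ n, f n ∉ P \ T := by
  constructor
  · rintro (⟨m, hm⟩ | h) n ⟨hnP, hnT⟩
    · rcases le_total m n with hmn | hnm
      · exact hnT (eq_of_le_of_mem_absorbing hP hf hmn (hT hm) ▸ hm)
      · exact hnT (eq_of_le_of_mem_absorbing hP hf hnm hnP ▸ hm)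
    · exact h n hnP
  · intro h
    by_cases hreach : ∃ n, f n ∈ P
    · obtain ⟨n, hn⟩ := hreach
      exact Or.inl ⟨n, by_contra fun hnT => h n ⟨hn, hnT⟩⟩
    · exact Or.inr (not_exists.1 hreach)

section Attractor

variable {S T : Set V}

variable (E S T) in
theorem attractorLevel_mono : Monotone (attractorLevel E S T) :=
  monotone_nat_of_le_succ fun _ => Set.subset_union_left

theorem controllablePre_attractor_subset [Finite V] :
    controllablePre E S (attractor E S T) ⊆ attractor E S T := by
  obtain ⟨N, hN⟩ := WellFoundedGT.monotone_chain_condition ⟨_, attractorLevel_mono E S T⟩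
  have hattr : attractor E S T = attractorLevel E S T N :=
    (Set.iUnion_subset fun m => (le_total m N).elim (attractorLevel_mono E S T ·)
      fun hNm => (hN m hNm).ge).antisymm (Set.subset_iUnion _ N)
  have hstable : attractorLevel E S T (N + 1) = attractorLevel E S T N :=
    (hN _ N.le_succ).symm
  rw [hattr]
  exact fun v hv => hstable ▸ Or.inr hv

theorem exists_succ_mem_of_monotone {A : ℕ → Set V} (hA : Monotone A) {v : V}
    (hv : ∃ w, E v w) : ∃ w, E v w ∧ ∀ n, (∃ w', E v w' ∧ w' ∈ A n) → w ∈ A n := by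
  classical
  by_cases h : ∃ n w', E v w' ∧ w' ∈ A n
  · obtain ⟨w, hw, hwA⟩ := Nat.find_spec h
    exact ⟨w, hw, fun n hn => hA (Nat.find_min' h hn) hwA⟩
  · obtain ⟨w, hw⟩ := hv
    exact ⟨w, hw, fun n hn => (h ⟨n, hn⟩).elim⟩

theorem exists_strategy_reaching (hout : ∀ v, ∃ w, E v w) :
    ∃ σ : V → V, (∀ v, E v (σ v)) ∧
      ∀ f, IsPlay E S σ f → f 0 ∈ attractor E S T → ∃ n, f n ∈ T := by
  choose σ hσE hσ using fun v => exists_succ_mem_of_monotone (attractorLevel_mono E S T) (hout v)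
  refine ⟨σ, hσE, fun f hf hf0 => ?_⟩
  obtain ⟨n, hn⟩ := Set.mem_iUnion.1 hf0
  induction n generalizing f with
  | zero => exact ⟨0, hn⟩
  | succ n ih =>
    rcases hn with hn | hn
    · exact ih f hf hf0 hn
    have hf1 : f 1 ∈ attractorLevel E S T n := by
      rcases hn with ⟨hS, hsucc⟩ | ⟨-, hall⟩
      · exact (hf 0).2 hS ▸ hσ _ n hsucc
      · exact hall _ (hf 0).1
    obtain ⟨k, hk⟩ :=
      ih (fun k => f (k + 1)) (fun k => hf (k + 1)) (Set.mem_iUnion.2 ⟨n, hf1⟩) hf1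
    exact ⟨k + 1, hk⟩

theorem exists_strategy_avoiding_attractor [Finite V] (hout : ∀ v, ∃ w, E v w) :
    ∃ τ : V → V, (∀ v, E v (τ v)) ∧
      ∀ f, IsPlay E Sᶜ τ f → f 0 ∉ attractor E S T → ∀ n, f n ∉ attractor E S T := by
  have hescape : ∀ v, ∃ w, E v w ∧
      ((∃ w', E v w' ∧ w' ∉ attractor E S T) → w ∉ attractor E S T) := fun v => by
    by_cases h : ∃ w', E v w' ∧ w' ∉ attractor E S T
    · obtain ⟨w, hw, hwA⟩ := h
      exact ⟨w, hw, fun _ => hwA⟩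
    · obtain ⟨w, hw⟩ := hout v
      exact ⟨w, hw, fun h' => (h h').elim⟩
  choose τ hτE hτ using hescape
  refine ⟨τ, hτE, fun f hf hf0 n => ?_⟩
  induction n with
  | zero => exact hf0
  | succ n ih =>
    intro hnext
    apply ih
    apply controllablePre_attractor_subset
    by_cases hS : f n ∈ S
    · exact Or.inl ⟨hS, _, (hf n).1, hnext⟩
    · refine Or.inr ⟨hS, fun w hw => by_contra fun hwA => ?_⟩
      exact hτ _ ⟨w, hw, hwA⟩ ((hf n).2 hS ▸ hnext)

theorem reachability_game_determined [Finite V] (hout : ∀ v, ∃ w, E v w) (S T : Set V) (v₀ : V) :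
    (∃ σ : V → V, (∀ v, E v (σ v)) ∧ ∀ f, f 0 = v₀ → IsPlay E S σ f → ∃ n, f n ∈ T) ∨
      ∃ τ : V → V, (∀ v, E v (τ v)) ∧ ∀ f, f 0 = v₀ → IsPlay E Sᶜ τ f → ∀ n, f n ∉ T := by
  by_cases hv₀ : v₀ ∈ attractor E S T
  · obtain ⟨σ, hσE, hσ⟩ := exists_strategy_reaching (S := S) (T := T) hout
    exact Or.inl ⟨σ, hσE, fun f h0 hf => hσ f hf (h0 ▸ hv₀)⟩
  · obtain ⟨τ, hτE, hτ⟩ := exists_strategy_avoiding_attractor (S := S) (T := T) hout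
    exact Or.inr ⟨τ, hτE, fun f h0 hf n hn =>
      hτ f hf (h0 ▸ hv₀) n (Set.mem_iUnion.2 ⟨0, hn⟩)⟩

end Attractor

end GraphGame

open GraphGame in
theorem dg_winlose_determinacy_general {V : Type*} [Fintype V] (E : V → V → Prop)
    (V₁ V₂ VT : Set V)
    (hcov : V₁ ∪ V₂ ∪ VT = Set.univ)
    (h12 : Disjoint V₁ V₂)
    (hterm : ∀ v ∈ VT, E v v ∧ ∀ w, E v w → w = v)
    (hout : ∀ v : V, ∃ w, E v w)
    (T₁ : Set V) (hT₁ : T₁ ⊆ VT) (cWin1 : Prop) :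
    ∀ v₀ : V, Xor'
      (∃ σ₁ : V → V, (∀ v ∈ V₁, E v (σ₁ v)) ∧
        ∀ f : ℕ → V, f 0 = v₀ →
          (∀ n, E (f n) (f (n + 1)) ∧ (f n ∈ V₁ → f (n + 1) = σ₁ (f n))) →
          ((∃ n, f n ∈ T₁) ∨ ((∀ n, f n ∉ VT) ∧ cWin1)))
      (∃ σ₂ : V → V, (∀ v ∈ V₂, E v (σ₂ v)) ∧
        ∀ f : ℕ → V, f 0 = v₀ →
          (∀ n, E (f n) (f (n + 1)) ∧ (f n ∈ V₂ → f (n + 1) = σ₂ (f n))) →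
          ¬ ((∃ n, f n ∈ T₁) ∨ ((∀ n, f n ∉ VT) ∧ cWin1))) := by
  intro v₀
  have hloop : ∀ v ∈ VT, ∀ w, E v w → w = v := fun v hv => (hterm v hv).2
  have hcompl₁ : V₁ᶜ ⊆ V₂ ∪ VT := Set.compl_subset_iff_union.2 (by rwa [← Set.union_assoc])
  have hcompl₂ : V₂ᶜ ⊆ V₁ ∪ VT :=
    Set.compl_subset_iff_union.2 (by rwa [← Set.union_assoc, Set.union_comm V₂])
  refine (xor_iff_or_and_not_and _ _).2 ⟨?_, ?_⟩
  · by_cases hc : cWin1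
    · simp only [hc, and_true]
      rcases reachability_game_determined hout V₂ (VT \ T₁) v₀ with ⟨σ, hσE, hσ⟩ | ⟨τ, hτE, hτ⟩
      · refine Or.inr ⟨σ, fun v _ => hσE v, fun f h0 hf hwin => ?_⟩
        obtain ⟨n, hn⟩ := hσ f h0 hf
        exact (exists_mem_or_forall_notMem_iff_of_absorbing hloop hT₁ fun k => (hf k).1).1 hwin n hn
      · refine Or.inl ⟨τ, fun v _ => hτE v, fun f h0 hf => ?_⟩
        exact (exists_mem_or_forall_notMem_iff_of_absorbing hloop hT₁ fun k => (hf k).1).2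
          (hτ f h0 (IsPlay.of_subset_union hf hτE hloop hcompl₂))
    · simp only [hc, and_false, or_false]
      rcases reachability_game_determined hout V₁ T₁ v₀ with ⟨σ, hσE, hσ⟩ | ⟨τ, hτE, hτ⟩
      · exact Or.inl ⟨σ, fun v _ => hσE v, hσ⟩
      · exact Or.inr ⟨τ, fun v _ => hτE v, fun f h0 hf ⟨n, hn⟩ =>
          hτ f h0 (IsPlay.of_subset_union hf hτE hloop hcompl₁) n hn⟩
  · rintro ⟨⟨σ₁, hσ₁, hwin₁⟩, σ₂, hσ₂, hwin₂⟩
    obtain ⟨f, h0, hf₁, hf₂⟩ := exists_isPlay_of_disjoint hout h12 hσ₁ hσ₂ v₀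
    exact hwin₂ f h0 hf₂ (hwin₁ f h0 hf₁)

/-- Every two-person win/lose DG game has a saddle point in pure positional strategies:
`V = V₁ ∪ V₂ ∪ VT` is a partition, terminals `VT` carry self-loops and no other outgoing
edges, every vertex has an outgoing edge, outcomes are the terminals plus one outcome `c`
for infinite plays, `T₁ ⊆ VT` and the proposition `cWin1` describe player 1's winning
outcomes. For every initial position, exactly one of the players has a positional
strategy winning against all strategies of the opponent. -/
theorem dg_winlose_determinacy {V : Type*} [Fintype V] (E : V → V → Prop)
    (V₁ V₂ VT : Set V)
    (hcov : V₁ ∪ V₂ ∪ VT = Set.univ)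
    (h12 : Disjoint V₁ V₂) (h1T : Disjoint V₁ VT) (h2T : Disjoint V₂ VT)
    (hterm : ∀ v ∈ VT, E v v ∧ ∀ w, E v w → w = v)
    (hout : ∀ v : V, ∃ w, E v w)
    (T₁ : Set V) (hT₁ : T₁ ⊆ VT) (cWin1 : Prop) :
    ∀ v₀ : V, Xor'
      (∃ σ₁ : V → V, (∀ v ∈ V₁, E v (σ₁ v)) ∧
        ∀ f : ℕ → V, f 0 = v₀ →
          (∀ n, E (f n) (f (n + 1)) ∧ (f n ∈ V₁ → f (n + 1) = σ₁ (f n))) →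
          ((∃ n, f n ∈ T₁) ∨ ((∀ n, f n ∉ VT) ∧ cWin1)))
      (∃ σ₂ : V → V, (∀ v ∈ V₂, E v (σ₂ v)) ∧
        ∀ f : ℕ → V, f 0 = v₀ →
          (∀ n, E (f n) (f (n + 1)) ∧ (f n ∈ V₂ → f (n + 1) = σ₂ (f n))) →
          ¬ ((∃ n, f n ∈ T₁) ∨ ((∀ n, f n ∉ VT) ∧ cWin1))) :=
  dg_winlose_determinacy_general E V₁ V₂ VT hcov h12 hterm hout T₁ hT₁ cWin1
end
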